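/- arXiv:1707.00685 — 4 statements merged into one kernel-verified Lean document; each statement's English description precedes it below -/
import Mathlib

section
/- For quaternions s, t, u with s² + t·conj(t) + (t + conj(t))·s ≠ 0, the unique quaternion q satisfying s·q + q·t = u is q = (s² + t·conj(t) + (t + conj(t))·s)⁻¹ · (s·u + u·conj(t)). -/
open Quaternion

lemma syl_key (s t q : ℍ[ℝ]) :
    s * (s * q + q * t) + (s * q + q * t) * star t
      = (s ^ 2 + t * star t + (t + star t) * s) * q := by
  ext <;> simp [pow_two, Quaternion.re_mul, Quaternion.imI_mul, Quaternion.imJ_mul,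
    Quaternion.imK_mul] <;> ring

theorem sylvester_solution (s t u : ℍ[ℝ])
    (h : s ^ 2 + t * star t + (t + star t) * s ≠ 0) :
    ∀ q : ℍ[ℝ], s * q + q * t = u ↔
      q = (s ^ 2 + t * star t + (t + star t) * s)⁻¹ * (s * u + u * star t) := by
  set c := s ^ 2 + t * star t + (t + star t) * s with hc
  set L : ℍ[ℝ] →ₗ[ℝ] ℍ[ℝ] := LinearMap.mulLeft ℝ s + LinearMap.mulRight ℝ t with hL
  have hLapp : ∀ q, L q = s * q + q * t := fun q => rfl
  have hinj : Function.Injective L := by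
    rw [injective_iff_map_eq_zero]
    intro q hq
    rw [hLapp] at hq
    have := syl_key s t q
    rw [hq, mul_zero, zero_mul, add_zero, ← hc] at this
    rcases mul_eq_zero.mp this.symm with h' | h'
    · exact absurd h' h
    · exact h'
  have hsurj : Function.Surjective L :=
    (LinearMap.injective_iff_surjective).mp hinj
  obtain ⟨q₀, hq₀⟩ := hsurj u
  rw [hLapp] at hq₀
  have hq₀' : q₀ = c⁻¹ * (s * u + u * star t) := by
    have := syl_key s t q₀
    rw [hq₀, ← hc] at this
    rw [this, inv_mul_cancel_left₀ h]
  intro q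
  constructor
  · intro hq
    have := syl_key s t q
    rw [hq, ← hc] at this
    rw [this, inv_mul_cancel_left₀ h]
  · intro hq
    rw [hq, ← hq₀', hq₀]
end

section
/- Every ℝ-linear endomorphism M of ℍ (viewed as a 4-dimensional real vector space) can be written in the form M(q) = p₀·q + p₁·q·i + p₂·q·j + p₃·q·k for some quaternions p₀, p₁, p₂, p₃, and this representation is unique. -/
/-!
Write `e₀, e₁, e₂, e₃` for `1, i, j, k`. Conjugating by all four units averages a quaternion to its
real part, `∑ₑ e x ē = 4 re x = ∑ₑ ē x e`, and the units are orthonormal, `re (eₘ ēₙ) = δₘₙ`.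
Hence if `M q = ∑ₙ pₙ q eₙ`, each coefficient is recovered as `pₙ = ¼ ∑ₑ M e ēₙ ē`. Conversely, these
coefficients reproduce `M`, since `¼ ∑ₙ ēₙ (ē q) eₙ = re (ē q)` are the coordinates of `q`.
-/

open Quaternion

def qi : ℍ[ℝ] := ⟨0, 1, 0, 0⟩
def qj : ℍ[ℝ] := ⟨0, 0, 1, 0⟩
def qk : ℍ[ℝ] := ⟨0, 0, 0, 1⟩

namespace Quaternion

variable {R : Type*} [CommRing R]

def stdUnit (n : Fin 4) : ℍ[R] :=
  ⟨if n = 0 then 1 else 0, if n = 1 then 1 else 0, if n = 2 then 1 else 0, if n = 3 then 1 else 0⟩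

section

variable (n : Fin 4)

@[simp] theorem re_stdUnit : (stdUnit n : ℍ[R]).re = if n = 0 then 1 else 0 := rfl
@[simp] theorem imI_stdUnit : (stdUnit n : ℍ[R]).imI = if n = 1 then 1 else 0 := rfl
@[simp] theorem imJ_stdUnit : (stdUnit n : ℍ[R]).imJ = if n = 2 then 1 else 0 := rfl
@[simp] theorem imK_stdUnit : (stdUnit n : ℍ[R]).imK = if n = 3 then 1 else 0 := rfl

end

theorem stdUnit_zero : (stdUnit 0 : ℍ[R]) = 1 := by
  ext <;> rfl

theorem sum_stdUnit_mul_mul_star (x : ℍ[R]) :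
    ∑ u, stdUnit u * x * star (stdUnit u) = ((4 * x.re : R) : ℍ[R]) := by
  ext <;> simp [Fin.sum_univ_four]
  ring

theorem sum_star_stdUnit_mul_mul (x : ℍ[R]) :
    ∑ u, star (stdUnit u) * x * stdUnit u = ((4 * x.re : R) : ℍ[R]) := by
  ext <;> simp [Fin.sum_univ_four]
  ring

theorem re_stdUnit_mul_star (m n : Fin 4) :
    (stdUnit m * star (stdUnit n) : ℍ[R]).re = if m = n then 1 else 0 := by
  fin_cases m <;> fin_cases n <;> simp

theorem sum_re_star_stdUnit_mul_smul (q : ℍ[R]) :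
    ∑ u, (star (stdUnit u) * q).re • stdUnit u = q := by
  ext <;> simp [Fin.sum_univ_four]

def lrMul (p : Fin 4 → ℍ[R]) (q : ℍ[R]) : ℍ[R] :=
  ∑ n, p n * q * stdUnit n

def lrCoeff [Invertible (4 : R)] (f : ℍ[R] → ℍ[R]) (n : Fin 4) : ℍ[R] :=
  ⅟(4 : R) • ∑ u, f (stdUnit u) * star (stdUnit n) * star (stdUnit u)

variable [Invertible (4 : R)]

theorem lrCoeff_lrMul (p : Fin 4 → ℍ[R]) : lrCoeff (lrMul p) = p := by
  funext n
  have key : ∑ u, lrMul p (stdUnit u) * star (stdUnit n) * star (stdUnit u) = (4 : R) • p n :=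
    calc ∑ u, lrMul p (stdUnit u) * star (stdUnit n) * star (stdUnit u)
        _ = ∑ m, p m * ∑ u, stdUnit u * (stdUnit m * star (stdUnit n)) * star (stdUnit u) := by
          simp only [lrMul, Finset.sum_mul, Finset.mul_sum, mul_assoc]
          exact Finset.sum_comm
        _ = (4 : R) • p n := by
          simp only [sum_stdUnit_mul_mul_star, re_stdUnit_mul_star, mul_coe_eq_smul, mul_ite,
            mul_one, mul_zero, ite_smul, zero_smul, Finset.sum_ite_eq', Finset.mem_univ, if_true]
  rw [lrCoeff, key, smul_smul, invOf_mul_self, one_smul]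

theorem lrMul_lrCoeff (M : ℍ[R] →ₗ[R] ℍ[R]) : lrMul (lrCoeff M) = M := by
  funext q
  calc lrMul (lrCoeff M) q
      _ = ∑ u, M (stdUnit u) *
            (⅟(4 : R) • ∑ n, star (stdUnit n) * (star (stdUnit u) * q) * stdUnit n) := by
        simp only [lrMul, lrCoeff, Finset.smul_sum, Finset.mul_sum, Finset.sum_mul, smul_mul_assoc,
          mul_smul_comm, mul_assoc]
        exact Finset.sum_comm
      _ = ∑ u, (star (stdUnit u) * q).re • M (stdUnit u) := by
        refine Finset.sum_congr rfl fun u _ => ?_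
        rw [sum_star_stdUnit_mul_mul, mul_smul_comm, mul_coe_eq_smul, smul_smul, ← mul_assoc,
          invOf_mul_self, one_mul]
      _ = M q := by
        conv_rhs => rw [← sum_re_star_stdUnit_mul_smul q]
        simp only [map_sum, map_smul]

theorem existsUnique_lrMul_eq (M : ℍ[R] →ₗ[R] ℍ[R]) :
    ∃! p : Fin 4 → ℍ[R], ∀ q, M q = lrMul p q :=
  ⟨lrCoeff M, fun q => by rw [lrMul_lrCoeff], fun p hp => by rw [funext hp, lrCoeff_lrMul]⟩

end Quaternion

theorem Quaternion.lrMul_apply (p : Fin 4 → ℍ[ℝ]) (q : ℍ[ℝ]) :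
    lrMul p q = p 0 * q + p 1 * q * qi + p 2 * q * qj + p 3 * q * qk := by
  simp only [lrMul, Fin.sum_univ_four, stdUnit_zero, mul_one]
  rfl

theorem endomorphism_lrMul_decomposition (M : ℍ[ℝ] →ₗ[ℝ] ℍ[ℝ]) :
    ∃! p : ℍ[ℝ] × ℍ[ℝ] × ℍ[ℝ] × ℍ[ℝ],
      ∀ q : ℍ[ℝ],
        M q = p.1 * q + p.2.1 * q * qi + p.2.2.1 * q * qj + p.2.2.2 * q * qk := by
  let _ : Invertible (4 : ℝ) := invertibleOfNonzero four_ne_zero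
  obtain ⟨p, hp, hp_unique⟩ := existsUnique_lrMul_eq M
  refine ⟨(p 0, p 1, p 2, p 3), fun q => by rw [hp, lrMul_apply], fun p' hp' => ?_⟩
  obtain rfl := hp_unique ![p'.1, p'.2.1, p'.2.2.1, p'.2.2.2] fun q => by rw [hp', lrMul_apply]; rfl
  rfl
end

section
/- Let f : ℍ → ℝ⁴ map 1, i, j, k to the standard orthonormal basis e₀, e₁, e₂, e₃ of ℝ⁴, and let CL(ℝ⁴) be the Clifford algebra of ℝ⁴ with the positive definite quadratic form. Define π : CL(ℝ⁴) → ℍ as the composition of: multiplication by (1+e₀)(1-e₀e₁e₂e₃), projection onto the subspace H spanned by 1, e₂e₃, e₁e₃, e₁e₂, and the linear isomorphism ι : H → ℍ sending 1↦1, e₂e₃↦-i, e₁e₃↦j, e₁e₂↦-k. Then for any A, B ∈ CL(ℝ⁴): if A is even, π(A·B) = π(A)·π(B); if A is odd, π(A·B) = π(A)·π(e₀·B·e₀). -/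
open Quaternion

/-- The positive definite quadratic form on `ℝ⁴`. -/
noncomputable def Q4 : QuadraticForm ℝ (Fin 4 → ℝ) :=
  QuadraticMap.weightedSumSquares ℝ (fun _ : Fin 4 => (1 : ℝ))

/-- The standard basis vectors of `ℝ⁴` as vectors in the Clifford algebra. -/
noncomputable def e (i : Fin 4) : CliffordAlgebra Q4 :=
  CliffordAlgebra.ι Q4 (Pi.single i 1)

/-!
The key identity is `π (v * y) = π v * π (e₀ * y * e₀)` for every vector `v` and every `y`.
Both sides are bilinear in `(v, y)`, so it suffices to check it for `v = eᵢ` and `y` one of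
the 16 basis monomials, a finite computation with the multiplication tables of `CL(ℝ⁴)` and `ℍ`.
Since `y ↦ e₀ * y * e₀` is a multiplicative involution sending vectors to vectors, applying the
identity twice gives `π (v₁ * v₂ * y) = π v₁ * π (e₀ * v₂ * e₀) * π y`, and induction over
products of pairs of vectors yields both the even and the odd case.
-/

open Submodule

namespace CliffordAlgebra

variable {R M A : Type*} [CommRing R] [AddCommGroup M] [Module R M] {Q : QuadraticForm R M}

theorem span_eq_top_of_ι_mul_mem {s : Set M} {t : Set (CliffordAlgebra Q)} (hs : span R s = ⊤)
    (ht : 1 ∈ t) (h : ∀ m ∈ s, ∀ y ∈ t, ι Q m * y ∈ span R t) : span R t = ⊤ := by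
  have hι : ∀ m, ∀ y ∈ span R t, ι Q m * y ∈ span R t := by
    intro m y hy
    induction (hs ▸ mem_top : m ∈ span R s), hy using span_induction₂ with
    | mem_mem m y hm hy => exact h m hm y hy
    | zero_left y _ => simp
    | zero_right m _ => simp
    | add_left m m' y _ _ _ hm hm' => rw [map_add, add_mul]; exact add_mem hm hm'
    | add_right m y y' _ _ _ hy hy' => rw [mul_add]; exact add_mem hy hy'
    | smul_left r m y _ _ hm => rw [map_smul, smul_mul_assoc]; exact smul_mem _ r hm
    | smul_right r m y _ _ hy => rw [mul_smul_comm]; exact smul_mem _ r hy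
  have hmul : ∀ x, ∀ y ∈ span R t, x * y ∈ span R t := by
    intro x
    induction x using CliffordAlgebra.induction with
    | algebraMap r =>
      intro y hy
      rw [Algebra.algebraMap_eq_smul_one, smul_mul_assoc, one_mul]
      exact smul_mem _ r hy
    | ι m => exact hι m
    | mul a b ha hb => exact fun y hy => mul_assoc a b y ▸ ha _ (hb y hy)
    | add a b ha hb => exact fun y hy => (add_mul a b y).symm ▸ add_mem (ha y hy) (hb y hy)
  exact eq_top_iff'.2 fun x => by simpa using hmul x 1 (subset_span ht)

def sandwich (u : M) (x : CliffordAlgebra Q) : CliffordAlgebra Q := ι Q u * x * ι Q u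

variable {u : M}

theorem sandwich_add (x y : CliffordAlgebra Q) :
    sandwich u (x + y) = sandwich u x + sandwich u y := by
  rw [sandwich, mul_add, add_mul]; rfl

theorem sandwich_smul (r : R) (x : CliffordAlgebra Q) :
    sandwich u (r • x) = r • sandwich u x := by
  rw [sandwich, mul_smul_comm, smul_mul_assoc]; rfl

theorem sandwich_mul (hu : Q u = 1) (x y : CliffordAlgebra Q) :
    sandwich u (x * y) = sandwich u x * sandwich u y := by
  simp only [sandwich, mul_assoc, ← mul_assoc (ι Q u) (ι Q u), ι_sq_scalar, hu, map_one, one_mul]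

theorem sandwich_sandwich (hu : Q u = 1) (x : CliffordAlgebra Q) :
    sandwich u (sandwich u x) = x := by
  simp only [sandwich, mul_assoc, ← mul_assoc (ι Q u) (ι Q u), ι_sq_scalar, hu, map_one, one_mul,
    mul_one]

theorem sandwich_ι (m : M) :
    sandwich u (ι Q m) = ι Q (QuadraticMap.polar Q u m • u - Q u • m) :=
  ι_mul_ι_mul_ι u m

variable [Ring A] [Algebra R A] {π : CliffordAlgebra Q →ₗ[R] A}

theorem map_ι_mul_of_span {s : Set M} {t : Set (CliffordAlgebra Q)} (hs : span R s = ⊤)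
    (ht : span R t = ⊤)
    (h : ∀ m ∈ s, ∀ y ∈ t, π (ι Q m * y) = π (ι Q m) * π (sandwich u y)) (m : M)
    (y : CliffordAlgebra Q) : π (ι Q m * y) = π (ι Q m) * π (sandwich u y) := by
  induction (hs ▸ mem_top : m ∈ span R s), (ht ▸ mem_top : y ∈ span R t)
    using span_induction₂ with
  | mem_mem m y hm hy => exact h m hm y hy
  | zero_left y _ => simp
  | zero_right m _ => simp [sandwich]
  | add_left m m' y _ _ _ hm hm' => simp only [map_add, add_mul, hm, hm']
  | add_right m y y' _ _ _ hy hy' => simp only [mul_add, map_add, sandwich_add, hy, hy']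
  | smul_left r m y _ _ hm => simp only [map_smul, smul_mul_assoc, hm]
  | smul_right r m y _ _ hy => simp only [mul_smul_comm, map_smul, sandwich_smul, hy]

theorem map_ι_mul_ι_mul (hu : Q u = 1)
    (hπ : ∀ m y, π (ι Q m * y) = π (ι Q m) * π (sandwich u y)) (m₁ m₂ : M)
    (y : CliffordAlgebra Q) :
    π (ι Q m₁ * ι Q m₂ * y) = π (ι Q m₁) * π (sandwich u (ι Q m₂)) * π y := by
  rw [mul_assoc, hπ, sandwich_mul hu, sandwich_ι, hπ, ← sandwich_ι, sandwich_sandwich hu, mul_assoc]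

theorem map_mul_of_mem_evenOdd_zero (hu : Q u = 1) (h1 : π 1 = 1)
    (hπ : ∀ m y, π (ι Q m * y) = π (ι Q m) * π (sandwich u y)) {x : CliffordAlgebra Q}
    (hx : x ∈ evenOdd Q 0) (y : CliffordAlgebra Q) : π (x * y) = π x * π y := by
  induction x, hx using even_induction with
  | algebraMap r => simp [Algebra.algebraMap_eq_smul_one, h1]
  | add x x' _ _ ihx ihx' => simp only [add_mul, map_add, ihx, ihx']
  | ι_mul_ι_mul m₁ m₂ x _ ih =>
    rw [mul_assoc, map_ι_mul_ι_mul hu hπ, map_ι_mul_ι_mul hu hπ, ih, ← mul_assoc]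

theorem map_mul_of_mem_evenOdd_one (hu : Q u = 1)
    (hπ : ∀ m y, π (ι Q m * y) = π (ι Q m) * π (sandwich u y)) {x : CliffordAlgebra Q}
    (hx : x ∈ evenOdd Q 1) (y : CliffordAlgebra Q) : π (x * y) = π x * π (sandwich u y) := by
  induction x, hx using odd_induction with
  | ι m => exact hπ m y
  | add x x' _ _ ihx ihx' => simp only [add_mul, map_add, ihx, ihx']
  | ι_mul_ι_mul m₁ m₂ x _ ih =>
    rw [mul_assoc, map_ι_mul_ι_mul hu hπ, map_ι_mul_ι_mul hu hπ, ih, ← mul_assoc]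

end CliffordAlgebra

open CliffordAlgebra

lemma Q4_single (i : Fin 4) : Q4 (Pi.single i 1) = 1 := by
  simp [Q4, QuadraticMap.weightedSumSquares_apply, Pi.single_apply]

lemma e_mul_self (i : Fin 4) : e i * e i = 1 := by
  rw [e, ι_sq_scalar, Q4_single, map_one]

lemma e_mul_e_of_lt {i j : Fin 4} (h : j < i) : e i * e j = -(e j * e i) := by
  refine ι_mul_ι_comm_of_isOrtho ?_
  simp [QuadraticMap.isOrtho_def, Q4, QuadraticMap.weightedSumSquares_apply, Pi.single_apply,
    Finset.sum_ite_eq', mul_add, Finset.sum_add_distrib, h.ne, h.ne']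

lemma mul_e_mul_self (x : CliffordAlgebra Q4) (i : Fin 4) : x * e i * e i = x := by
  rw [mul_assoc, e_mul_self, mul_one]

lemma mul_e_mul_e_of_lt (x : CliffordAlgebra Q4) {i j : Fin 4} (h : j < i) :
    x * e i * e j = -(x * e j * e i) := by
  rw [mul_assoc, e_mul_e_of_lt h, mul_neg, mul_assoc]

def monomials : Set (CliffordAlgebra Q4) :=
  {1, e 0, e 1, e 2, e 3, e 0 * e 1, e 0 * e 2, e 0 * e 3, e 1 * e 2, e 1 * e 3, e 2 * e 3,
    e 0 * e 1 * e 2, e 0 * e 1 * e 3, e 0 * e 2 * e 3, e 1 * e 2 * e 3, e 0 * e 1 * e 2 * e 3}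

lemma span_monomials : span ℝ monomials = ⊤ := by
  refine span_eq_top_of_ι_mul_mem (Pi.basisFun ℝ (Fin 4)).span_eq (by simp [monomials]) ?_
  rintro _ ⟨i, rfl⟩ y hy
  rw [Pi.basisFun_apply]
  change e i * y ∈ _
  simp only [monomials, Set.mem_insert_iff, Set.mem_singleton_iff] at hy
  obtain rfl | rfl | rfl | rfl : i = 0 ∨ i = 1 ∨ i = 2 ∨ i = 3 := by omega
  all_goals rcases hy with rfl|rfl|rfl|rfl|rfl|rfl|rfl|rfl|rfl|rfl|rfl|rfl|rfl|rfl|rfl|rfl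
  all_goals simp (config := { failIfUnchanged := false }) (disch := decide) only [← mul_assoc,
    mul_one, one_mul, e_mul_self, mul_e_mul_self, e_mul_e_of_lt, mul_e_mul_e_of_lt, neg_mul,
    neg_neg, neg_mem_iff]
  all_goals exact subset_span (by simp only [monomials, Set.mem_insert_iff,
    Set.mem_singleton_iff, true_or, or_true])

lemma qi_mul_qi : qi * qi = -1 := by
  ext <;> simp [Quaternion.re_mul, Quaternion.imI_mul, Quaternion.imJ_mul, Quaternion.imK_mul]
    <;> simp [qi]

lemma qj_mul_qj : qj * qj = -1 := by
  ext <;> simp [Quaternion.re_mul, Quaternion.imI_mul, Quaternion.imJ_mul, Quaternion.imK_mul]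
    <;> simp [qj]

lemma qk_mul_qk : qk * qk = -1 := by
  ext <;> simp [Quaternion.re_mul, Quaternion.imI_mul, Quaternion.imJ_mul, Quaternion.imK_mul]
    <;> simp [qk]

lemma qi_mul_qj : qi * qj = qk := by
  ext <;> simp [Quaternion.re_mul, Quaternion.imI_mul, Quaternion.imJ_mul, Quaternion.imK_mul]
    <;> simp [qi, qj, qk]

lemma qj_mul_qi : qj * qi = -qk := by
  ext <;> simp [Quaternion.re_mul, Quaternion.imI_mul, Quaternion.imJ_mul, Quaternion.imK_mul]
    <;> simp [qi, qj, qk]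

lemma qj_mul_qk : qj * qk = qi := by
  ext <;> simp [Quaternion.re_mul, Quaternion.imI_mul, Quaternion.imJ_mul, Quaternion.imK_mul]
    <;> simp [qi, qj, qk]

lemma qk_mul_qj : qk * qj = -qi := by
  ext <;> simp [Quaternion.re_mul, Quaternion.imI_mul, Quaternion.imJ_mul, Quaternion.imK_mul]
    <;> simp [qi, qj, qk]

lemma qk_mul_qi : qk * qi = qj := by
  ext <;> simp [Quaternion.re_mul, Quaternion.imI_mul, Quaternion.imJ_mul, Quaternion.imK_mul]
    <;> simp [qi, qj, qk]

lemma qi_mul_qk : qi * qk = -qj := by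
  ext <;> simp [Quaternion.re_mul, Quaternion.imI_mul, Quaternion.imJ_mul, Quaternion.imK_mul]
    <;> simp [qi, qj, qk]

/-- If `π : CL(ℝ⁴) → ℍ` is the linear map of the paper (determined by its values on
the 16 basis monomials), then `π` is multiplicative on products with an even left factor,
and twisted-multiplicative (via the conjugate `e₀ B e₀`) when the left factor is odd. -/
theorem pi_conjugate_homomorphism (π : CliffordAlgebra Q4 →ₗ[ℝ] ℍ[ℝ])
    (h1 : π 1 = 1) (h2 : π (e 0) = 1) (h3 : π (e 1 * e 2 * e 3) = 1)
    (h4 : π (e 0 * e 1 * e 2 * e 3) = -1)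
    (h5 : π (e 1) = qi) (h6 : π (e 0 * e 1) = -qi) (h7 : π (e 2 * e 3) = -qi)
    (h8 : π (e 0 * e 2 * e 3) = -qi)
    (h9 : π (e 2) = qj) (h10 : π (e 0 * e 2) = -qj) (h11 : π (e 1 * e 3) = qj)
    (h12 : π (e 0 * e 1 * e 3) = qj)
    (h13 : π (e 3) = qk) (h14 : π (e 0 * e 3) = -qk) (h15 : π (e 1 * e 2) = -qk)
    (h16 : π (e 0 * e 1 * e 2) = -qk) :
    ∀ A B : CliffordAlgebra Q4,
      (A ∈ CliffordAlgebra.evenOdd Q4 0 → π (A * B) = π A * π B) ∧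
      (A ∈ CliffordAlgebra.evenOdd Q4 1 → π (A * B) = π A * π (e 0 * B * e 0)) := by
  have h_monomials : ∀ i, ∀ y ∈ monomials, π (e i * y) = π (e i) * π (e 0 * y * e 0) := by
    intro i y hy
    simp only [monomials, Set.mem_insert_iff, Set.mem_singleton_iff] at hy
    obtain rfl | rfl | rfl | rfl : i = 0 ∨ i = 1 ∨ i = 2 ∨ i = 3 := by omega
    all_goals rcases hy with rfl|rfl|rfl|rfl|rfl|rfl|rfl|rfl|rfl|rfl|rfl|rfl|rfl|rfl|rfl|rfl
    all_goals simp (disch := decide) only [← mul_assoc, mul_one, one_mul, e_mul_self,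
      mul_e_mul_self, e_mul_e_of_lt, mul_e_mul_e_of_lt, neg_mul, mul_neg, neg_neg, map_neg,
      h1, h2, h3, h4, h5, h6, h7, h8, h9, h10, h11, h12, h13, h14, h15, h16, qi_mul_qi, qj_mul_qj,
      qk_mul_qk, qi_mul_qj, qj_mul_qi, qj_mul_qk, qk_mul_qj, qk_mul_qi, qi_mul_qk]
  have hπ : ∀ m y, π (ι Q4 m * y) = π (ι Q4 m) * π (sandwich (Pi.single 0 1) y) := by
    refine map_ι_mul_of_span (Pi.basisFun ℝ (Fin 4)).span_eq span_monomials ?_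
    rintro _ ⟨i, rfl⟩
    rw [Pi.basisFun_apply]
    exact h_monomials i
  intro A B
  exact ⟨fun hA => map_mul_of_mem_evenOdd_zero (Q4_single 0) h1 hπ hA B,
    fun hA => map_mul_of_mem_evenOdd_one (Q4_single 0) hπ hA B⟩
end

section
/- In the Clifford algebra CL(ℝ⁴) with positive definite quadratic form, for any vectors x₁, x₂, x₃, x₄ ∈ ℝ⁴: 4·⟨x₁x₂x₃x₄⟩₄ = x₁x₂x₃x₄ + x₄x₃x₂x₁ - x₄x₁x₂x₃ - x₃x₂x₁x₄, where ⟨·⟩₄ denotes the grade-4 part and juxtaposition is the Clifford product. In particular, the grade-4 part x₁∧x₂∧x₃∧x₄ satisfies this identity. -/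
open Quaternion

/-- The wedge product of four vectors, viewed inside the Clifford algebra (i.e. the
grade-4 part `x₁∧x₂∧x₃∧x₄`), obtained by pulling back the exterior product along the
canonical linear isomorphism between the Clifford algebra and the exterior algebra. -/
noncomputable def wedge4 (x₁ x₂ x₃ x₄ : Fin 4 → ℝ) : CliffordAlgebra Q4 :=
  (CliffordAlgebra.equivExterior Q4).symm
    (ExteriorAlgebra.ι ℝ x₁ * ExteriorAlgebra.ι ℝ x₂ * ExteriorAlgebra.ι ℝ x₃ *
      ExteriorAlgebra.ι ℝ x₄)

open CliffordAlgebra in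
lemma changeForm_ι4 {R M : Type*} [CommRing R] [AddCommGroup M] [Module R M]
    [Invertible (2 : R)]
    {Q' : QuadraticForm R M} {B : LinearMap.BilinForm R M}
    (h : B.toQuadraticMap = Q' - 0) (a b c d : M) :
    changeForm h (ι (0 : QuadraticForm R M) a * ι 0 b * ι 0 c * ι 0 d) =
      ι Q' a * ι Q' b * ι Q' c * ι Q' d
      - B c d • (ι Q' a * ι Q' b) - B b c • (ι Q' a * ι Q' d) + B b d • (ι Q' a * ι Q' c)
      - B a b • (ι Q' c * ι Q' d) + B a c • (ι Q' b * ι Q' d) - B a d • (ι Q' b * ι Q' c)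
      + (B a b * B c d + B a d * B b c - B a c * B b d) • (1 : CliffordAlgebra Q') := by
  simp only [mul_assoc, changeForm_ι_mul, changeForm_ι, map_sub, map_add, map_smul,
    contractLeft_ι_mul, contractLeft_ι, contractLeft_algebraMap, contractLeft_one,
    LinearMap.map_smul, Algebra.algebraMap_eq_smul_one, map_zero, smul_sub, smul_smul,
    mul_sub, sub_mul, mul_smul_comm, smul_mul_assoc, mul_one, one_mul, mul_zero, zero_mul,
    smul_zero, sub_zero]
  module

open CliffordAlgebra QuadraticMap

theorem grade_four_part_identity (x₁ x₂ x₃ x₄ : Fin 4 → ℝ) :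
    (4 : ℝ) • wedge4 x₁ x₂ x₃ x₄ =
      CliffordAlgebra.ι Q4 x₁ * CliffordAlgebra.ι Q4 x₂ * CliffordAlgebra.ι Q4 x₃ *
          CliffordAlgebra.ι Q4 x₄
        + CliffordAlgebra.ι Q4 x₄ * CliffordAlgebra.ι Q4 x₃ * CliffordAlgebra.ι Q4 x₂ *
          CliffordAlgebra.ι Q4 x₁
        - CliffordAlgebra.ι Q4 x₄ * CliffordAlgebra.ι Q4 x₁ * CliffordAlgebra.ι Q4 x₂ *
          CliffordAlgebra.ι Q4 x₃
        - CliffordAlgebra.ι Q4 x₃ * CliffordAlgebra.ι Q4 x₂ * CliffordAlgebra.ι Q4 x₁ *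
          CliffordAlgebra.ι Q4 x₄ := by
  have hw : wedge4 x₁ x₂ x₃ x₄ =
      changeForm (changeForm.neg_proof (changeForm.associated_neg_proof (Q := Q4)))
        (ι (0 : QuadraticForm ℝ (Fin 4 → ℝ)) x₁ * ι 0 x₂ * ι 0 x₃ * ι 0 x₄) := rfl
  rw [hw, changeForm_ι4]
  set B : LinearMap.BilinForm ℝ (Fin 4 → ℝ) :=
    -(QuadraticMap.associated (R := ℝ) (-Q4)) with hBdef
  have hB : ∀ u v, polar Q4 u v = 2 * B u v := by
    intro u v
    have h2 : (2 • QuadraticMap.associatedHom ℝ (-Q4)) u v = (-Q4).polarBilin u v := by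
      rw [QuadraticMap.two_nsmul_associated]
    simp only [LinearMap.smul_apply, polarBilin_apply_apply, smul_eq_mul,
      Nat.cast_ofNat, nsmul_eq_mul, polar, QuadraticMap.neg_apply] at h2
    simp only [polar]
    have hBuv : B u v = -(QuadraticMap.associatedHom ℝ (-Q4) u v) := rfl
    rw [hBuv]
    linarith [h2]
  -- swap rules
  have swap : ∀ u v : Fin 4 → ℝ, ι Q4 u * ι Q4 v = polar Q4 u v • (1 : CliffordAlgebra Q4)
      - ι Q4 v * ι Q4 u := by
    intro u v
    rw [ι_mul_ι_comm, Algebra.algebraMap_eq_smul_one]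
  have swap' : ∀ (u v : Fin 4 → ℝ) (y : CliffordAlgebra Q4),
      ι Q4 u * (ι Q4 v * y) = polar Q4 u v • y - ι Q4 v * (ι Q4 u * y) := by
    intro u v y
    rw [← mul_assoc, swap, sub_mul, smul_mul_assoc, one_mul, mul_assoc]
  have h21 := swap x₂ x₁; have h31 := swap x₃ x₁; have h41 := swap x₄ x₁
  have h32 := swap x₃ x₂; have h42 := swap x₄ x₂; have h43 := swap x₄ x₃
  have h21' := swap' x₂ x₁; have h31' := swap' x₃ x₁; have h41' := swap' x₄ x₁
  have h32' := swap' x₃ x₂; have h42' := swap' x₄ x₂; have h43' := swap' x₄ x₃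
  have hsymm : ∀ u v, B u v = B v u := fun u v => by
    have h := QuadraticMap.associated_isSymm ℝ (-Q4) u v
    have h1 : B u v = -(QuadraticMap.associatedHom ℝ (-Q4) u v) := rfl
    have h2 : B v u = -(QuadraticMap.associatedHom ℝ (-Q4) v u) := rfl
    rw [h1, h2, ← h]
  simp only [hB, hsymm x₂ x₁, hsymm x₃ x₁, hsymm x₄ x₁, hsymm x₃ x₂, hsymm x₄ x₂,
    hsymm x₄ x₃] at h21 h31 h41 h32 h42 h43 h21' h31' h41' h32' h42' h43'
  simp only [mul_assoc, h21, h31, h41, h32, h42, h43, h21', h31', h41', h32', h42', h43',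
    mul_sub, sub_mul, smul_sub, smul_smul, mul_smul_comm, smul_mul_assoc, mul_one, one_mul]
  module
end
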